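/- Let n ∈ ℕ and let S be a nonempty finite multiset of natural numbers with at most 2^n elements, and let N = Σ_{s ∈ S} 2^{s·(n+1)}. Then the maximum element of S equals ⌊log₂(N) / (n+1)⌋. In particular, for a satisfiable CNF φ with n variables and weight function w on its variables, the maximum of w(β) over satisfying assignments β equals ⌊log₂(Σ_{β ⊨ φ} 2^{w(β)(n+1)}) / (n+1)⌋. -/

import Mathlib

open scoped Classical

/-- A literal: a propositional variable (indexed by a natural number) or its negation. -/
structure Lit where
  var : ℕ
  pos : Bool
deriving DecidableEq

/-- A clause is a finite set of literals. -/
abbrev Clause := Finset Lit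

/-- The variables occurring in a clause. -/
def Clause.varsOf (c : Clause) : Finset ℕ := c.image Lit.var

/-- A weighted CNF: a finite set of clauses with weights in `ℕ ∪ {∞}`. -/
structure WCNF where
  clauses : Finset Clause
  weight : Clause → ℕ∞

/-- An assignment satisfies a literal. -/
def satLit (β : ℕ → Bool) (l : Lit) : Prop := β l.var = l.pos

/-- An assignment satisfies a clause if it makes some literal true. -/
def satClause (β : ℕ → Bool) (c : Clause) : Prop := ∃ l ∈ c, satLit β l

/-- The cost of an assignment: sum of the weights of the falsified clauses. -/
noncomputable def WCNF.costA (φ : WCNF) (β : ℕ → Bool) : ℕ∞ :=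
  ∑ c ∈ φ.clauses.filter (fun c => ¬ satClause β c), φ.weight c

/-- The cost of a WCNF: the minimum cost over all assignments. -/
noncomputable def WCNF.cost (φ : WCNF) : ℕ∞ := ⨅ β : ℕ → Bool, φ.costA β

/-- The variables of a set of clauses. -/
def cnfVars (C : Finset Clause) : Finset ℕ := C.biUnion Clause.varsOf

/-- The variables of a WCNF. -/
def WCNF.vars (φ : WCNF) : Finset ℕ := cnfVars φ.clauses

/-- The primal graph of a set of clauses: vertices are the variables (all of `ℕ`),
with an edge between distinct variables occurring together in a clause. -/
def primalOf (C : Finset Clause) : SimpleGraph ℕ :=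
  SimpleGraph.fromRel (fun u v => ∃ c ∈ C, u ∈ c.varsOf ∧ v ∈ c.varsOf)

/-- The incidence graph of a set of clauses: the bipartite graph on variables and
clauses joining each clause to the variables it contains. -/
def incOf (C : Finset Clause) : SimpleGraph (ℕ ⊕ Clause) :=
  SimpleGraph.fromRel (fun a b =>
    ∃ x c, a = Sum.inl x ∧ b = Sum.inr c ∧ c ∈ C ∧ x ∈ c.varsOf)

/-- A tree decomposition of a graph `G`: a tree `TG` together with finite bags such that
every vertex occurs in some bag, every edge is covered by a bag, and for each vertex the
nodes whose bags contain it induce a nonempty connected subgraph (hence a subtree). -/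
structure TreeDecomp {V T : Type} (G : SimpleGraph V) (TG : SimpleGraph T) where
  isTree : TG.IsTree
  bag : T → Finset V
  covers_vertex : ∀ v : V, ∃ t, v ∈ bag t
  covers_edge : ∀ u v : V, G.Adj u v → ∃ t, u ∈ bag t ∧ v ∈ bag t
  connected : ∀ v : V, (TG.induce {t | v ∈ bag t}).Connected

/-- `G` has a tree decomposition of width at most `k`. -/
def HasTD {V : Type} (G : SimpleGraph V) (k : ℕ) : Prop :=
  ∃ (T : Type) (TG : SimpleGraph T) (D : TreeDecomp G TG), ∀ t, (D.bag t).card ≤ k + 1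

/-- The treewidth of a graph: the minimum width of a tree decomposition (`⊤` if none). -/
noncomputable def tw {V : Type} (G : SimpleGraph V) : ℕ∞ :=
  sInf {x : ℕ∞ | ∃ k : ℕ, x = k ∧ HasTD G k}

/-- The primal treewidth of a WCNF. -/
noncomputable def WCNF.tw (φ : WCNF) : ℕ∞ := _root_.tw (primalOf φ.clauses)

/-- The incidence treewidth of a WCNF. -/
noncomputable def WCNF.itw (φ : WCNF) : ℕ∞ := _root_.tw (incOf φ.clauses)

/-- A (monotone) weighted CNF with integer weights. -/
structure ZWCNF where
  clauses : Finset Clause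
  weight : Clause → ℤ

/-- Cost of an assignment for an integer-weighted CNF. -/
noncomputable def ZWCNF.costA (φ : ZWCNF) (β : ℕ → Bool) : ℤ :=
  ∑ c ∈ φ.clauses.filter (fun c => ¬ satClause β c), φ.weight c

/-- `v` is the minimum cost of `φ`. -/
def ZWCNF.IsMinCost (φ : ZWCNF) (v : ℤ) : Prop :=
  (∃ β, φ.costA β = v) ∧ ∀ β, v ≤ φ.costA β

/-- A formula is monotone if every literal occurring in it is negative. -/
def ZWCNF.Mono (φ : ZWCNF) : Prop := ∀ c ∈ φ.clauses, ∀ l ∈ c, l.pos = false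

noncomputable def ZWCNF.tw (φ : ZWCNF) : ℕ∞ := _root_.tw (primalOf φ.clauses)

noncomputable def ZWCNF.itw (φ : ZWCNF) : ℕ∞ := _root_.tw (incOf φ.clauses)

/-- A QUBO instance: `H(x) = Σ_i lin i * x_i + Σ_{i<j} quad i j * x_i x_j`
with integer weights supported on a finite set of variables. -/
structure QUBO where
  vars : Finset ℕ
  lin : ℕ → ℤ
  quad : ℕ → ℕ → ℤ
  lin_supp : ∀ i, lin i ≠ 0 → i ∈ vars
  quad_supp : ∀ i j, quad i j ≠ 0 → i ∈ vars ∧ j ∈ vars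
  quad_lt : ∀ i j, quad i j ≠ 0 → i < j

/-- Value of a Boolean, identifying `true` with `1` and `false` with `0`. -/
def bval (b : Bool) : ℤ := if b then 1 else 0

/-- Evaluation of a QUBO Hamiltonian on a `{0,1}`-assignment. -/
def QUBO.eval (H : QUBO) (x : ℕ → Bool) : ℤ :=
  (∑ i ∈ H.vars, H.lin i * bval (x i)) +
    ∑ i ∈ H.vars, ∑ j ∈ H.vars, H.quad i j * bval (x i) * bval (x j)

/-- A ground state: an assignment minimizing `H`. -/
def QUBO.IsGround (H : QUBO) (x : ℕ → Bool) : Prop := ∀ y, H.eval x ≤ H.eval y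

/-- `μ` is the minimum value of `H`. -/
def QUBO.IsMinVal (H : QUBO) (μ : ℤ) : Prop :=
  (∃ x, H.eval x = μ) ∧ ∀ x, μ ≤ H.eval x

/-- The primal graph of a QUBO: an edge `{i,j}` whenever the quadratic weight is nonzero. -/
def QUBO.primal (H : QUBO) : SimpleGraph ℕ :=
  SimpleGraph.fromRel (fun i j => H.quad i j ≠ 0)

/-- The incidence graph of a QUBO: bipartite graph on variables and nonzero terms
(linear terms indexed by a variable, quadratic terms by a pair of variables). -/
def QUBO.inc (H : QUBO) : SimpleGraph (ℕ ⊕ (ℕ ⊕ ℕ × ℕ)) :=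
  SimpleGraph.fromRel (fun a b =>
    (∃ i, a = Sum.inl i ∧ b = Sum.inr (Sum.inl i) ∧ H.lin i ≠ 0) ∨
    (∃ x i j, a = Sum.inl x ∧ b = Sum.inr (Sum.inr (i, j)) ∧ H.quad i j ≠ 0 ∧ (x = i ∨ x = j)))

noncomputable def QUBO.tw (H : QUBO) : ℕ∞ := _root_.tw H.primal

noncomputable def QUBO.itw (H : QUBO) : ℕ∞ := _root_.tw H.inc

/-- An assignment satisfies an (unweighted) CNF if it satisfies every clause. -/
def satCNF (β : ℕ → Bool) (φ : Finset Clause) : Prop := ∀ c ∈ φ, satClause β c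

/-- The weight of an assignment: the sum of weights of the variables set to true. -/
noncomputable def wOf (φ : Finset Clause) (w : ℕ → ℕ) (β : ℕ → Bool) : ℕ :=
  ∑ x ∈ (cnfVars φ).filter (fun x => β x = true), w x

/-- The satisfying assignments of a CNF, represented as the subsets of its variable set
consisting of the variables set to true. -/
noncomputable def satSets (φ : Finset Clause) : Finset (Finset ℕ) :=
  (cnfVars φ).powerset.filter (fun S => ∀ c ∈ φ, ∃ l ∈ c, ((l.var ∈ S) ↔ l.pos = true))

/-!
Let `M` be the largest element of `S`. Since `S` has fewer than `b ^ k` elements,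
`b ^ (M k) ≤ Σ_{s ∈ S} b ^ (s k) ≤ |S| b ^ (M k) < b ^ ((M + 1) k)`, so the integer base-`b`
logarithm of the sum lies in `[M k, (M + 1) k)` and dividing it by `k` recovers `M`.
A CNF on `n` variables has at most `2 ^ n < 2 ^ (n + 1)` satisfying assignments.
-/

theorem Multiset.sup_mem_of_ne_zero {α : Type*} [LinearOrder α] [OrderBot α] {S : Multiset α}
    (hS : S ≠ 0) : S.sup ∈ S := by
  obtain ⟨y, hyS, hy⟩ := S.exists_max_image id hS
  rwa [le_antisymm (Multiset.sup_le.mpr hy) (Multiset.le_sup hyS)]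

theorem Nat.log_div_eq_of_pow_mul_le_of_lt {b k m N : ℕ} (hb : 1 < b)
    (hlow : b ^ (m * k) ≤ N) (hup : N < b ^ ((m + 1) * k)) : Nat.log b N / k = m := by
  have hN : N ≠ 0 := Nat.one_le_iff_ne_zero.mp ((Nat.one_le_pow _ _ (by omega)).trans hlow)
  exact Nat.div_eq_of_lt_le ((Nat.le_log_iff_pow_le hb hN).mpr hlow)
    ((Nat.log_lt_iff_lt_pow hb hN).mpr hup)

theorem Multiset.sup_eq_log_sum_pow_div {b k : ℕ} (hb : 1 < b) {S : Multiset ℕ} (hS : S ≠ 0)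
    (hcard : Multiset.card S < b ^ k) :
    S.sup = Nat.log b (S.map fun s => b ^ (s * k)).sum / k := by
  set M := S.sup
  have hlow : b ^ (M * k) ≤ (S.map fun s => b ^ (s * k)).sum :=
    Multiset.le_sum_of_mem
      (Multiset.mem_map_of_mem (fun s => b ^ (s * k)) (Multiset.sup_mem_of_ne_zero hS))
  have hup : (S.map fun s => b ^ (s * k)).sum < b ^ ((M + 1) * k) :=
    calc (S.map fun s => b ^ (s * k)).sum
        ≤ Multiset.card S * b ^ (M * k) := by
          rw [← Multiset.card_map (fun s => b ^ (s * k)), ← smul_eq_mul]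
          exact Multiset.sum_le_card_nsmul _ _ (Multiset.forall_mem_map_iff.mpr fun s hs =>
            Nat.pow_le_pow_right (by omega) (Nat.mul_le_mul_right k (Multiset.le_sup hs)))
      _ < b ^ k * b ^ (M * k) := Nat.mul_lt_mul_of_pos_right hcard (by positivity)
      _ = b ^ ((M + 1) * k) := by rw [← pow_add]; ring_nf
  exact (Nat.log_div_eq_of_pow_mul_le_of_lt hb hlow hup).symm

theorem Finset.sup_eq_log_sum_pow_div {ι : Type*} {b k : ℕ} (hb : 1 < b) {s : Finset ι}
    (hs : s.Nonempty) (hcard : s.card < b ^ k) (f : ι → ℕ) :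
    s.sup f = Nat.log b (∑ i ∈ s, b ^ (f i * k)) / k := by
  have h := Multiset.sup_eq_log_sum_pow_div hb (S := s.val.map f)
    (by simpa using hs.ne_empty) (by simpa using hcard)
  rwa [Multiset.map_map] at h

theorem card_satSets_le (φ : Finset Clause) : (satSets φ).card ≤ 2 ^ (cnfVars φ).card :=
  (Finset.card_le_card (Finset.filter_subset _ _)).trans (Finset.card_powerset _).le

/-- for a nonempty multiset `S` of naturals with at most `2^n` elements and
`N = Σ_{s ∈ S} 2^{s(n+1)}`, the maximum element of `S` equals `⌊log₂ N / (n+1)⌋`; in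
particular, for a satisfiable CNF `φ` with `n` variables and variable weights `w`, the
maximum weight of a satisfying assignment equals
`⌊log₂(Σ_{β ⊨ φ} 2^{w(β)(n+1)}) / (n+1)⌋`. -/
theorem stmt15 :
    (∀ (n : ℕ) (S : Multiset ℕ), S ≠ 0 → Multiset.card S ≤ 2 ^ n →
      S.sup = Nat.log 2 ((S.map (fun s => 2 ^ (s * (n + 1)))).sum) / (n + 1)) ∧
    (∀ (φ : Finset Clause) (w : ℕ → ℕ), (satSets φ).Nonempty →
      (satSets φ).sup (fun S => ∑ x ∈ S, w x) =
        Nat.log 2 (∑ S ∈ satSets φ, 2 ^ ((∑ x ∈ S, w x) * ((cnfVars φ).card + 1))) /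
          ((cnfVars φ).card + 1)) := by
  refine ⟨fun n S hS hcard => ?_, fun φ w hφ => ?_⟩
  · exact Multiset.sup_eq_log_sum_pow_div one_lt_two hS
      (hcard.trans_lt (Nat.pow_lt_pow_succ one_lt_two))
  · exact Finset.sup_eq_log_sum_pow_div one_lt_two hφ
      ((card_satSets_le φ).trans_lt (Nat.pow_lt_pow_succ one_lt_two)) _
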